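/- arXiv:2405.11561 — 6 statements merged into one kernel-verified Lean document; each statement's English description precedes it below -/
import Mathlib

section
/- Let X be a simplicial set. If for every n ≥ 3 and every 0 < j < n the map X_n → X_{{0,j,j+1,...,n}} ×_{X_{{0,j}}} X_{{0,1,...,j}} induced by the corresponding inclusions of subsets of [n] is a bijection, then for every triangulation T of the (n+1)-gon in which every triangle contains the vertex 0, the induced 2-Segal map from X_n to the limit of X over the triangles and shared edges of T is a bijection. -/
/-!
STATEMENT 3: Let `X` be a simplicial set.  If for every `n ≥ 3` and every `0 < j < n`
the map `X_n → X_{{0,j,j+1,…,n}} ×_{X_{{0,j}}} X_{{0,1,…,j}}` induced by the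
corresponding inclusions of subsets of `[n]` is a bijection, then for every triangulation
of the `(n+1)`-gon in which every triangle contains the vertex `0` — i.e. the fan
triangulation with triangles `{0,i,i+1}`, `i = 1,…,n-1` — the induced 2-Segal map from
`X_n` to the limit of `X` over the triangles and shared edges is a bijection.

Bijectivity onto a fibre product is expressed as injectivity together with surjectivity
onto the compatible tuples.
-/

open CategoryTheory Opposite Simplicial SimplexCategory

/-- The inclusion `{0, j, j+1, …, n} ⊆ [n]`, as a map `[n-j+1] → [n]` of `Δ`. -/
def incUpper (n j : ℕ) (hj : j ≤ n) : SimplexCategory.mk (n - j + 1) ⟶ SimplexCategory.mk n :=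
  SimplexCategory.mkHom
    ⟨fun i => ⟨if i.val = 0 then 0 else j + i.val - 1, by have := i.isLt; split <;> omega⟩,
     fun a b hab => by
      have ha := a.isLt; have hb := b.isLt
      have h := Fin.le_def.mp hab
      rw [Fin.le_def]
      dsimp
      split_ifs <;> omega⟩

/-- The inclusion `{0, 1, …, j} ⊆ [n]`, as a map `[j] → [n]` of `Δ`. -/
def incLower (n j : ℕ) (hj : j ≤ n) : SimplexCategory.mk j ⟶ SimplexCategory.mk n :=
  SimplexCategory.mkHom
    ⟨fun i => ⟨i.val, by have := i.isLt; omega⟩,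
     fun a b hab => by rw [Fin.le_def]; exact Fin.le_def.mp hab⟩

/-- The inclusion `{0, j} ⊆ {0, j, j+1, …, n}`, i.e. the vertices in positions `0, 1`. -/
def edgeUpper (n j : ℕ) : SimplexCategory.mk 1 ⟶ SimplexCategory.mk (n - j + 1) :=
  SimplexCategory.mkHom
    ⟨fun i => ⟨i.val, by have := i.isLt; omega⟩,
     fun a b hab => by rw [Fin.le_def]; exact Fin.le_def.mp hab⟩

/-- The inclusion `{0, j} ⊆ {0, 1, …, j}`, i.e. the vertices in positions `0, j`. -/
def edgeLower (n j : ℕ) : SimplexCategory.mk 1 ⟶ SimplexCategory.mk j :=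
  SimplexCategory.mkHom
    ⟨fun i => ⟨if i.val = 0 then 0 else j, by split <;> omega⟩,
     fun a b hab => by
      have h := Fin.le_def.mp hab
      rw [Fin.le_def]
      dsimp
      split_ifs <;> omega⟩

/-- The triangle `{0, i+1, i+2} ⊆ [n]` of the fan triangulation, as a map `[2] → [n]`. -/
def tri (n i : ℕ) (h : i + 2 ≤ n) : SimplexCategory.mk 2 ⟶ SimplexCategory.mk n :=
  SimplexCategory.mkHom
    ⟨fun v => ⟨if v.val = 0 then 0 else i + v.val, by have := v.isLt; split <;> omega⟩,
     fun a b hab => by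
      have h := Fin.le_def.mp hab
      rw [Fin.le_def]
      dsimp
      split_ifs <;> omega⟩

/-!
Induction on `n`. For `j = n - 1` the left 2-Segal bijection splits an `n`-simplex into its
last fan triangle `{0, n - 1, n}` and its face `{0, …, n - 1}`, glued along `{0, n - 1}`. By
induction that face is the same as a compatible fan of triangles of the `n`-gon, and the gluing
edge `{0, n - 1}` is the edge `δ 1` of the last of them, so the gluing condition is exactly the
compatibility of the new triangle with the previous one.
-/

def BijOntoFiberProduct {A B C D : Type*} (f : A → B) (g : A → C) (u : B → D) (v : C → D) :
    Prop :=
  Function.Injective (fun a => (f a, g a)) ∧ ∀ b c, u b = v c → ∃ a, f a = b ∧ g a = c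

lemma BijOntoFiberProduct.of_comp_injective {A B B' C D : Type*} {f : A → B} {g : A → C}
    {u : B → D} {v : C → D} (hfg : BijOntoFiberProduct f g u v) {e : B' → B}
    (he : Function.Injective e) {f' : A → B'} (hf : ∀ a, e (f' a) = f a) {u' : B' → D}
    (hu : ∀ b, u (e b) = u' b) : BijOntoFiberProduct f' g u' v := by
  refine ⟨fun a₁ a₂ h => hfg.1 ?_, fun b c hbc => ?_⟩
  · simp only [Prod.mk.injEq, ← hf] at h ⊢
    exact ⟨congrArg e h.1, h.2⟩
  · obtain ⟨a, hfa, hga⟩ := hfg.2 (e b) c ((hu b).trans hbc)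
    exact ⟨a, he ((hf a).trans hfa), hga⟩

namespace SSet

variable (X : SSet)

lemma tri_comp_incLower {n j i : ℕ} (hi : i + 2 ≤ j) (hj : j ≤ n) :
    tri j i hi ≫ incLower n j hj = tri n i (hi.trans hj) :=
  rfl

lemma tri_two {i : ℕ} (h : i + 2 ≤ 2) : tri 2 i h = 𝟙 ⦋2⦌ := by
  obtain rfl : i = 0 := by omega
  ext v : 3
  fin_cases v <;> rfl

lemma edgeLower_eq_δ_one_comp_tri (n k : ℕ) :
    edgeLower n (k + 2) = δ (1 : Fin 3) ≫ tri (k + 2) k le_rfl := by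
  ext v : 3
  fin_cases v <;> rfl

lemma incUpper_eq_eqToHom_comp_tri (k : ℕ) (hj : k + 1 ≤ k + 2)
    (h : ⦋k + 2 - (k + 1) + 1⦌ = ⦋2⦌) :
    incUpper (k + 2) (k + 1) hj = eqToHom h ≫ tri (k + 2) k le_rfl := by
  ext v : 4
  simp [incUpper, tri, eqToHom_toOrderHom]

lemma edgeUpper_comp_eqToHom (n j : ℕ) (h : ⦋n - j + 1⦌ = ⦋2⦌) :
    edgeUpper n j ≫ eqToHom h = δ (2 : Fin 3) := by
  ext v : 4
  fin_cases v <;> simp [edgeUpper, eqToHom_toOrderHom] <;> rfl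

/-- For `n = j + 1` the upper face `{0, j, j + 1}` is the last triangle of the fan. -/
lemma bijOntoFiberProduct_tri_incLower {X : SSet} (k : ℕ) (hj : k + 1 ≤ k + 2)
    (hseg : BijOntoFiberProduct (X.map (incUpper (k + 2) (k + 1) hj).op)
      (X.map (incLower (k + 2) (k + 1) hj).op) (X.map (edgeUpper (k + 2) (k + 1)).op)
      (X.map (edgeLower (k + 2) (k + 1)).op)) :
    BijOntoFiberProduct (X.map (tri (k + 2) k le_rfl).op)
      (X.map (incLower (k + 2) (k + 1) hj).op) (X.map (δ (2 : Fin 3)).op)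
      (X.map (edgeLower (k + 2) (k + 1)).op) := by
  have h : ⦋k + 2 - (k + 1) + 1⦌ = ⦋2⦌ := by congr 1; omega
  refine hseg.of_comp_injective (e := X.map (eqToHom h).op)
    ((mono_iff_injective _).mp inferInstance) (fun x => ?_) (fun t => ?_)
  · rw [incUpper_eq_eqToHom_comp_tri k hj h, op_comp, Functor.map_comp_apply]
  · rw [← Functor.map_comp_apply, ← op_comp, edgeUpper_comp_eqToHom]

/-- The 2-Segal map of the fan triangulation of the `(n + 1)`-gon, with triangles
`{0, i + 1, i + 2}` for `i < n - 1`. -/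
def fanMap (n : ℕ) (x : X _⦋n⦌) (i : Fin (n - 1)) : X _⦋2⦌ :=
  X.map (tri n i (by have := i.isLt; omega)).op x

def FanCompatible (n : ℕ) (y : Fin (n - 1) → X _⦋2⦌) : Prop :=
  ∀ (i : ℕ) (h : i + 1 < n - 1),
    X.map (δ (2 : Fin 3)).op (y ⟨i + 1, h⟩) = X.map (δ (1 : Fin 3)).op (y ⟨i, by omega⟩)

def FanSegalBijective (n : ℕ) : Prop :=
  Function.Injective (X.fanMap n) ∧ ∀ y, X.FanCompatible n y → ∃ x, X.fanMap n x = y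

lemma fanMap_two (x : X _⦋2⦌) (i : Fin (2 - 1)) : X.fanMap 2 x i = x := by
  rw [fanMap, tri_two, op_id, Functor.map_id_apply]

lemma fanMap_incLower {n j : ℕ} (hj : j ≤ n) (x : X _⦋n⦌) (i : Fin (j - 1)) :
    X.fanMap j (X.map (incLower n j hj).op x) i = X.fanMap n x ⟨i, by omega⟩ := by
  rw [fanMap, ← Functor.map_comp_apply, ← op_comp, tri_comp_incLower]
  rfl

lemma fanSegalBijective_two : X.FanSegalBijective 2 := by
  refine ⟨fun x₁ x₂ h => ?_, fun y _ => ⟨y ⟨0, Nat.one_pos⟩, funext fun i => ?_⟩⟩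
  · simpa only [fanMap_two] using congrFun h ⟨0, Nat.one_pos⟩
  · rw [fanMap_two]
    exact congrArg y (Fin.ext (by omega))

lemma FanSegalBijective.succ {X : SSet} {k : ℕ} (ih : X.FanSegalBijective (k + 2))
    (hj : k + 2 ≤ k + 3)
    (hseg : BijOntoFiberProduct (X.map (tri (k + 3) (k + 1) le_rfl).op)
      (X.map (incLower (k + 3) (k + 2) hj).op) (X.map (δ (2 : Fin 3)).op)
      (X.map (edgeLower (k + 3) (k + 2)).op)) :
    X.FanSegalBijective (k + 3) := by
  constructor
  · intro x₁ x₂ h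
    refine hseg.1 (Prod.ext (congrFun h ⟨k + 1, by omega⟩) (ih.1 (funext fun i => ?_)))
    rw [fanMap_incLower, fanMap_incLower]
    exact congrFun h _
  · intro y hy
    obtain ⟨b, hb⟩ := ih.2 (y ∘ Fin.castLE (by omega)) fun i h => hy i (by omega)
    have hedge : X.map (δ (2 : Fin 3)).op (y ⟨k + 1, by omega⟩) =
        X.map (edgeLower (k + 3) (k + 2)).op b := by
      rw [edgeLower_eq_δ_one_comp_tri, op_comp, Functor.map_comp_apply]
      exact (hy k (by omega)).trans (congrArg _ (congrFun hb ⟨k, by omega⟩).symm)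
    obtain ⟨x, hx_last, hx_lower⟩ := hseg.2 _ b hedge
    refine ⟨x, funext fun i => ?_⟩
    by_cases hi : i.val < k + 1
    · calc X.fanMap (k + 3) x i = X.fanMap (k + 2) b ⟨i, hi⟩ := by
            rw [← hx_lower, fanMap_incLower]
        _ = y i := congrFun hb ⟨i, hi⟩
    · rw [show i = ⟨k + 1, by omega⟩ from Fin.ext (show i.val = k + 1 by omega)]
      exact hx_last

lemma fanSegalBijective_of_bijOntoFiberProduct (hseg : ∀ k : ℕ, BijOntoFiberProduct
      (X.map (incUpper (k + 3) (k + 2) (by omega)).op)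
      (X.map (incLower (k + 3) (k + 2) (by omega)).op) (X.map (edgeUpper (k + 3) (k + 2)).op)
      (X.map (edgeLower (k + 3) (k + 2)).op))
    (k : ℕ) : X.FanSegalBijective (k + 2) := by
  induction k with
  | zero => exact X.fanSegalBijective_two
  | succ k ih => exact ih.succ _ (bijOntoFiberProduct_tri_incLower (k + 1) _ (hseg k))

end SSet

/-- If all the left 2-Segal maps
`X_n → X_{{0,j,…,n}} ×_{X_{{0,j}}} X_{{0,…,j}}` of a simplicial set `X` are bijections,
then the 2-Segal map associated to the fan triangulation (all of whose triangles contain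
the vertex `0`) is a bijection onto the limit over the triangles and shared diagonals. -/
theorem fan_two_segal_map_bijective (X : SSet)
    (H : ∀ (n j : ℕ), 3 ≤ n → 0 < j → ∀ hj : j < n,
      Function.Injective (fun x : X.obj (op (SimplexCategory.mk n)) =>
        (X.map (incUpper n j hj.le).op x, X.map (incLower n j hj.le).op x)) ∧
      ∀ (a : X.obj (op (SimplexCategory.mk (n - j + 1))))
        (b : X.obj (op (SimplexCategory.mk j))),
        X.map (edgeUpper n j).op a = X.map (edgeLower n j).op b →
          ∃ x, X.map (incUpper n j hj.le).op x = a ∧ X.map (incLower n j hj.le).op x = b)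
    (n : ℕ) (hn : 2 ≤ n) :
    Function.Injective (fun x : X.obj (op (SimplexCategory.mk n)) =>
      fun i : Fin (n - 1) => X.map (tri n i.val (by have := i.isLt; omega)).op x) ∧
    ∀ y : (i : Fin (n - 1)) → X.obj (op (SimplexCategory.mk 2)),
      (∀ (i : ℕ) (h : i + 1 < n - 1),
        X.map (SimplexCategory.δ (2 : Fin 3)).op (y ⟨i + 1, h⟩) =
          X.map (SimplexCategory.δ (1 : Fin 3)).op (y ⟨i, Nat.lt_of_succ_lt h⟩)) →
      ∃ x, ∀ i : Fin (n - 1),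
        X.map (tri n i.val (by have := i.isLt; omega)).op x = y i := by
  obtain ⟨k, rfl⟩ := Nat.exists_eq_add_of_le' hn
  obtain ⟨hinj, hsurj⟩ := X.fanSegalBijective_of_bijOntoFiberProduct
    (fun k => H (k + 3) (k + 2) (by omega) (by omega) (by omega)) k
  exact ⟨hinj, fun y hy => (hsurj y hy).imp fun x hx => congrFun hx⟩
end

section
/- Let C be a category with cofibrations and let i : {0,j} ↪ {α_1 < ... < α_l} be an injection of finite subsets of [n] with 0 and j among the α's. Then the induced functor S_α C → S_{{0,j}} C is an isofibration: for every object A of S_α C and every isomorphism f : A_{0,j} → B in C, there exist an object B' of S_α C and an isomorphism g : A → B' whose (0,j)-component is f. -/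
open CategoryTheory Limits

universe v u

/-- A category with cofibrations in the sense of Waldhausen. -/
structure CategoryWithCofibrations (C : Type u) [Category.{v} C] where
  zero : C
  isZero : IsZero zero
  cof : MorphismProperty C
  cof_from_zero : ∀ {A : C} (f : zero ⟶ A), cof f
  cof_of_isIso : ∀ {A B : C} (f : A ⟶ B), IsIso f → cof f
  cof_comp : ∀ {A B D : C} (f : A ⟶ B) (g : B ⟶ D), cof f → cof g → cof (f ≫ g)
  cof_pushout : ∀ {A B X : C} (f : A ⟶ B) (g : A ⟶ X), cof f →
    ∃ (P : C) (inl : B ⟶ P) (inr : X ⟶ P), IsPushout f g inl inr ∧ cof inr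

variable {C : Type u} [Category.{v} C]

/-- The poset `Ar[n]` of pairs `(i,j)`, `0 ≤ i ≤ j ≤ n`, ordered componentwise. -/
abbrev ArrPoset (n : ℕ) : Type :=
  {p : Fin (n + 1) × Fin (n + 1) // p.1 ≤ p.2}

/-- The morphism of `Ar[n]` from `(i,j)` to `(i',j')` when `i ≤ i'` and `j ≤ j'`. -/
def arHom {n : ℕ} (a b : ArrPoset n) (h : a.1.1 ≤ b.1.1) (h' : a.1.2 ≤ b.1.2) : a ⟶ b :=
  homOfLE (show a.1 ≤ b.1 from Prod.le_def.mpr ⟨h, h'⟩)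

/-- The defining property of the objects of `SₙC`: a functor `Ar[n] ⥤ C` which is zero
on the diagonal and such that `A_{i,j} ↣ A_{i,k} ↠ A_{j,k}` is a cofibration sequence
for all `i < j < k` (`A_{j,k}` is the pushout of `A_{i,j} ↣ A_{i,k}` along `A_{i,j} → 0`). -/
def IsSFunctor (W : CategoryWithCofibrations C) {n : ℕ} (F : ArrPoset n ⥤ C) : Prop :=
  (∀ j : Fin (n + 1), IsZero (F.obj ⟨(j, j), le_refl j⟩)) ∧
  ∀ (i j k : Fin (n + 1)) (hij : i < j) (hjk : j < k),
    W.cof (F.map (arHom ⟨(i, j), hij.le⟩ ⟨(i, k), (hij.trans hjk).le⟩ (le_refl i) hjk.le)) ∧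
    IsPushout
      (F.map (arHom ⟨(i, j), hij.le⟩ ⟨(i, k), (hij.trans hjk).le⟩ (le_refl i) hjk.le))
      (F.map (arHom ⟨(i, j), hij.le⟩ ⟨(j, j), le_refl j⟩ hij.le (le_refl j)))
      (F.map (arHom ⟨(i, k), (hij.trans hjk).le⟩ ⟨(j, k), hjk.le⟩ hij.le (le_refl k)))
      (F.map (arHom ⟨(j, j), le_refl j⟩ ⟨(j, k), hjk.le⟩ (le_refl j) hjk.le))

/-- The category `SₙC`, as the full subcategory of `Fun(Ar[n], C)` on the `S`-functors. -/
abbrev SCat (W : CategoryWithCofibrations C) (n : ℕ) :=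
  ObjectProperty.FullSubcategory (IsSFunctor W (n := n))

/-- A chain of `n - 1` composable cofibrations `A_1 ↣ A_2 ↣ ⋯ ↣ A_n` in `C`. -/
structure CofChain (W : CategoryWithCofibrations C) (n : ℕ) where
  obj : Fin n → C
  map : ∀ (i : ℕ) (h : i + 1 < n), obj ⟨i, Nat.lt_of_succ_lt h⟩ ⟶ obj ⟨i + 1, h⟩
  cof : ∀ (i : ℕ) (h : i + 1 < n), W.cof (map i h)

/-- The top row `A_{0,1} ↣ A_{0,2} ↣ ⋯ ↣ A_{0,n}` of an object of `SₙC`. -/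
def topRow (W : CategoryWithCofibrations C) (n : ℕ) (X : SCat W n) : CofChain W n where
  obj i := X.obj.obj ⟨(0, i.succ), Fin.zero_le _⟩
  map i h := X.obj.map (arHom _ _ (le_refl 0) (by
    simp only [Fin.succ_mk, Fin.le_def, Fin.val_mk]
    omega))
  cof i h := by
    have := (X.property.2 0 (Fin.succ ⟨i, Nat.lt_of_succ_lt h⟩) (Fin.succ ⟨i + 1, h⟩)
      (by simp [Fin.lt_def]) (by simp [Fin.lt_def])).1
    exact this

/-!
STATEMENT 9: Let `C` be a category with cofibrations and `i : {0,j} ↪ α` an injection of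
finite subsets of `[n]` with `0, j ∈ α`.  Then the induced functor `S_α C → S_{0,j} C` is
an isofibration.

Via the order isomorphism `α ≅ [l-1]`, the functor `S_α C → S_{0,j} C ≅ C` is the
evaluation of an `S`-diagram at the pair `(0, q)`, where `q` is the position of `j` in
`α` (the position of `0` in `α` is `0`, since `0` is the least element).  So the claim
reads: for every object `A` of `SₘC` and every isomorphism `f : A_{0,q} ≅ B` in `C`
there are an object `B'` of `SₘC` and an isomorphism `g : A ≅ B'` whose value under the
evaluation functor is exactly `f`, i.e. `B'_{0,q} = B` and the `(0,q)`-component of `g`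
is `f`.
-/

/-! Cofibrations and pushout squares are invariant under isomorphism, hence so is being an
`S`-functor. It therefore suffices to replace the value of the underlying functor at `(0, q)`
by `B`, conjugating the structure maps by `f`. -/

instance CategoryWithCofibrations.cof_respectsIso (W : CategoryWithCofibrations C) :
    W.cof.RespectsIso :=
  MorphismProperty.RespectsIso.mk _
    (fun _ _ hf => W.cof_comp _ _ (W.cof_of_isIso _ inferInstance) hf)
    (fun _ _ hf => W.cof_comp _ _ hf (W.cof_of_isIso _ inferInstance))

instance isSFunctor_isClosedUnderIsomorphisms (W : CategoryWithCofibrations C) (n : ℕ) :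
    ObjectProperty.IsClosedUnderIsomorphisms (IsSFunctor W (n := n)) where
  of_iso {F G} e hF := by
    refine ⟨fun j => (hF.1 j).of_iso (e.app _).symm, fun i j k hij hjk => ?_⟩
    obtain ⟨hcof, hpush⟩ := hF.2 i j k hij hjk
    exact ⟨(W.cof.arrow_mk_iso_iff (Arrow.isoMk (e.app _) (e.app _))).1 hcof,
      hpush.of_iso (e.app _) (e.app _) (e.app _) (e.app _)
        (e.hom.naturality _) (e.hom.naturality _) (e.hom.naturality _) (e.hom.naturality _)⟩

section

variable {J D : Type*} [Category J] [Category D]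

theorem CategoryTheory.Functor.exists_iso_app_eq (F : J ⥤ D) (j : J) {B : D}
    (f : F.obj j ≅ B) :
    ∃ (G : J ⥤ D) (e : F ≅ G) (h : G.obj j = B), e.hom.app j ≫ eqToHom h = f.hom := by
  classical
  let e (p : J) : F.obj p ≅ Function.update F.obj j B p :=
    if h : p = j then eqToIso (congrArg F.obj h) ≪≫ f ≪≫ eqToIso (by rw [h, Function.update_self])
    else eqToIso (Function.update_of_ne h B F.obj).symm
  refine ⟨F.copyObj _ e, F.isoCopyObj _ e, by simp, ?_⟩
  simp only [Functor.isoCopyObj_hom_app, e, dif_pos, Iso.trans_hom, eqToIso.hom, eqToHom_refl,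
    Category.id_comp]
  -- `(F.copyObj _ e).obj j` is `Function.update F.obj j B j` only up to unfolding, which blocks
  -- `simp` from reassociating and cancelling the two `eqToHom`s.
  exact (Category.assoc _ _ _).trans ((f.hom ≫= eqToHom_trans _ _).trans (Category.comp_id _))

theorem CategoryTheory.ObjectProperty.exists_iso_app_eq {P : ObjectProperty (J ⥤ D)}
    [P.IsClosedUnderIsomorphisms] (A : P.FullSubcategory) (j : J) {B : D}
    (f : A.obj.obj j ≅ B) :
    ∃ (B' : P.FullSubcategory) (g : A ≅ B') (h : B'.obj.obj j = B),
      g.hom.hom.app j ≫ eqToHom h = f.hom := by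
  obtain ⟨G, e, h, he⟩ := A.obj.exists_iso_app_eq j f
  exact ⟨⟨G, P.prop_of_iso e A.property⟩, P.isoMk e, h, he⟩

end

theorem sCat_eval_isofibration_general (W : CategoryWithCofibrations C) (m : ℕ)
    (q : Fin (m + 1)) (A : SCat W m) (B : C)
    (f : A.obj.obj ⟨(0, q), Fin.zero_le q⟩ ≅ B) :
    ∃ (B' : SCat W m) (g : A ≅ B') (h : B'.obj.obj ⟨(0, q), Fin.zero_le q⟩ = B),
      g.hom.hom.app ⟨(0, q), Fin.zero_le q⟩ ≫ eqToHom h = f.hom :=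
  ObjectProperty.exists_iso_app_eq A _ f

theorem sCat_eval_isofibration (W : CategoryWithCofibrations C) (m : ℕ)
    (q : Fin (m + 1)) (hq : 0 < q) (A : SCat W m) (B : C)
    (f : A.obj.obj ⟨(0, q), Fin.zero_le q⟩ ≅ B) :
    ∃ (B' : SCat W m) (g : A ≅ B') (h : B'.obj.obj ⟨(0, q), Fin.zero_le q⟩ = B),
      g.hom.hom.app ⟨(0, q), Fin.zero_le q⟩ ≫ eqToHom h = f.hom :=
  sCat_eval_isofibration_general W m q A B f
end

section
/- In the canonical model structure on Cat, if a diagram of categories C → D ← E has either leg full and surjective on objects, then the comparison functor from the standard homotopy pullback of the diagram to the 2-fiber product C ×^{(2)}_D E admits, over each object of the 2-fiber product, a slice category with an initial object; consequently by Quillen's Theorem A the comparison functor is a homotopy equivalence on nerves when C, D, E are groupoids. -/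
/-!
STATEMENT 11: For a diagram of groupoids `C --F--> D <--K-- E` in which one of the two
legs is full and surjective on objects, the comparison functor from the standard
homotopy pullback of the diagram (objects `(c,d,e,φ,ψ)` with `F(c) = K(e)`, morphisms the
pairs `(c → c', e → e')` with matching images) to the 2-fiber product `C ×⁽²⁾_D E`
(objects `(c,d,e, φ : F(c) ≅ d, ψ : K(e) ≅ d)` with no equality condition) admits, over
each object of the 2-fiber product, a slice category with an initial object — whence, by
Quillen's Theorem A, it is a homotopy equivalence on nerves.
-/

open CategoryTheory

universe u v₁ v₂ v₃ u₁ u₂ u₃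

variable {C : Type u₁} {D : Type u₂} {E : Type u₃}
  [Groupoid C] [Groupoid D] [Groupoid E]

/-- An object of the 2-fiber product `C ×⁽²⁾_D E` of `F : C ⥤ D` and `K : E ⥤ D`. -/
structure TwoFiber (F : C ⥤ D) (K : E ⥤ D) where
  a : C
  b : D
  c : E
  φ : F.obj a ≅ b
  ψ : K.obj c ≅ b

/-- A morphism of the 2-fiber product. -/
@[ext]
structure TwoFiberHom {F : C ⥤ D} {K : E ⥤ D} (x y : TwoFiber F K) where
  fa : x.a ⟶ y.a
  fb : x.b ⟶ y.b
  fc : x.c ⟶ y.c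
  wφ : x.φ.hom ≫ fb = F.map fa ≫ y.φ.hom
  wψ : x.ψ.hom ≫ fb = K.map fc ≫ y.ψ.hom

instance (F : C ⥤ D) (K : E ⥤ D) : Category (TwoFiber F K) where
  Hom := TwoFiberHom
  id x := ⟨𝟙 _, 𝟙 _, 𝟙 _, by simp, by simp⟩
  comp f g :=
    ⟨f.fa ≫ g.fa, f.fb ≫ g.fb, f.fc ≫ g.fc, by
      rw [← Category.assoc, f.wφ, Category.assoc, g.wφ, Functor.map_comp, Category.assoc], by
      rw [← Category.assoc, f.wψ, Category.assoc, g.wψ, Functor.map_comp, Category.assoc]⟩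
  id_comp f := TwoFiberHom.ext (Category.id_comp _) (Category.id_comp _) (Category.id_comp _)
  comp_id f := TwoFiberHom.ext (Category.comp_id _) (Category.comp_id _) (Category.comp_id _)
  assoc f g h := TwoFiberHom.ext (Category.assoc _ _ _) (Category.assoc _ _ _) (Category.assoc _ _ _)

/-- An object of the standard homotopy pullback of `F : C ⥤ D` and `K : E ⥤ D`:
a tuple `(c, d, e, φ, ψ)` with `F(c) = K(e)`. -/
structure HPB (F : C ⥤ D) (K : E ⥤ D) where
  a : C
  b : D
  c : E
  he : F.obj a = K.obj c
  φ : F.obj a ≅ b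
  ψ : K.obj c ≅ b

/-- A morphism of the homotopy pullback: a pair with matching images in `D`. -/
@[ext]
structure HPBHom {F : C ⥤ D} {K : E ⥤ D} (x y : HPB F K) where
  fa : x.a ⟶ y.a
  fc : x.c ⟶ y.c
  w : F.map fa ≫ eqToHom y.he = eqToHom x.he ≫ K.map fc

instance (F : C ⥤ D) (K : E ⥤ D) : Category (HPB F K) where
  Hom := HPBHom
  id x := ⟨𝟙 _, 𝟙 _, by simp⟩
  comp f g :=
    ⟨f.fa ≫ g.fa, f.fc ≫ g.fc, by
      rw [Functor.map_comp, Functor.map_comp, Category.assoc, g.w, ← Category.assoc,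
        f.w, Category.assoc]⟩
  id_comp f := HPBHom.ext (Category.id_comp _) (Category.id_comp _)
  comp_id f := HPBHom.ext (Category.comp_id _) (Category.comp_id _)
  assoc f g h := HPBHom.ext (Category.assoc _ _ _) (Category.assoc _ _ _)

/-- The comparison functor from the homotopy pullback to the 2-fiber product, sending
`(c,d,e,φ,ψ)` (with `F(c) = K(e)`) to `(c,d,e,φ,φ)`. -/
def compare (F : C ⥤ D) (K : E ⥤ D) : HPB F K ⥤ TwoFiber F K where
  obj x := ⟨x.a, x.b, x.c, x.φ, eqToIso x.he.symm ≪≫ x.φ⟩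
  map {x y} f :=
    { fa := f.fa
      fb := x.φ.inv ≫ F.map f.fa ≫ y.φ.hom
      fc := f.fc
      wφ := by simp
      wψ := by
        have w := f.w
        simp only [Iso.trans_hom, eqToIso.hom, Category.assoc, Iso.hom_inv_id_assoc]
        rw [← Category.assoc, ← Category.assoc (K.map f.fc)]
        congr 1
        rw [eqToHom_comp_iff]
        rw [comp_eqToHom_iff] at w
        rw [w]
        simp }
  map_id x := TwoFiberHom.ext rfl
    (by show x.φ.inv ≫ F.map (𝟙 x.a) ≫ x.φ.hom = 𝟙 x.b; simp) rfl
  map_comp {x y z} f g := TwoFiberHom.ext rfl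
    (by
      show x.φ.inv ≫ F.map (f.fa ≫ g.fa) ≫ z.φ.hom =
        (x.φ.inv ≫ F.map f.fa ≫ y.φ.hom) ≫ (y.φ.inv ≫ F.map g.fa ≫ z.φ.hom)
      simp) rfl

/-!
The comparison functor is fully faithful: in a morphism of the 2-fiber product the middle
component is forced by the first, and the two compatibility squares combine into the
matching condition of the homotopy pullback. A full leg that is surjective on objects makes
it essentially surjective. A slice of a fully faithful functor into a groupoid has every
object initial, so each slice is nonempty and has an initial object.
-/

namespace CategoryTheory.CostructuredArrow

/-- Every morphism to `y` is invertible, so `X.hom ≫ Z.hom⁻¹` lifts uniquely to `X ⟶ Z`. -/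
noncomputable def isInitialOfFullyFaithful {A : Type u₁} {B : Type u₂} [Category.{v₁} A]
    [Category.{v₂} B] [IsGroupoid B]
    {L : A ⥤ B} (hL : L.FullyFaithful) {y : B} (X : CostructuredArrow L y) :
    Limits.IsInitial X :=
  Limits.IsInitial.ofUniqueHom
    (fun Z => homMk (hL.preimage (X.hom ≫ inv Z.hom)) (by simp))
    (fun Z m => by
      apply hom_ext
      change m.left = hL.preimage _
      apply hL.map_injective
      rw [hL.map_preimage, ← w m, Category.assoc, IsIso.hom_inv_id,
        Category.comp_id])

end CategoryTheory.CostructuredArrow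

section Compare

variable (F : C ⥤ D) (K : E ⥤ D)

instance : IsGroupoid (TwoFiber F K) where
  all_isIso {x y} f := by
    refine ⟨⟨⟨inv f.fa, inv f.fb, inv f.fc, ?_, ?_⟩, ?_, ?_⟩⟩
    · rw [Functor.map_inv, IsIso.eq_inv_comp, ← Category.assoc, ← f.wφ, Category.assoc,
        IsIso.hom_inv_id, Category.comp_id]
    · rw [Functor.map_inv, IsIso.eq_inv_comp, ← Category.assoc, ← f.wψ, Category.assoc,
        IsIso.hom_inv_id, Category.comp_id]
    · exact TwoFiberHom.ext (IsIso.hom_inv_id _) (IsIso.hom_inv_id _) (IsIso.hom_inv_id _)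
    · exact TwoFiberHom.ext (IsIso.inv_hom_id _) (IsIso.inv_hom_id _) (IsIso.inv_hom_id _)

def fullyFaithfulCompare : (compare F K).FullyFaithful where
  preimage {x x'} f :=
    { fa := f.fa
      fc := f.fc
      w := by
        -- substitute `wφ` into `wψ` and cancel `x'.φ`
        have hφ := f.wφ
        have hψ := f.wψ
        dsimp [_root_.compare] at hφ hψ
        rw [Category.assoc, hφ, ← Category.assoc, ← Category.assoc, cancel_mono,
          eqToHom_comp_iff] at hψ
        simp [hψ] }
  map_preimage f := by
    refine TwoFiberHom.ext rfl ?_ rfl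
    have hφ := f.wφ
    dsimp [_root_.compare] at hφ ⊢
    rw [← hφ, Iso.inv_hom_id_assoc]
  preimage_map f := rfl

lemma essSurj_compare_of_full_left (hF : Function.Surjective F.obj) [F.Full] :
    (compare F K).EssSurj where
  mem_essImage y := by
    obtain ⟨a, ha⟩ := hF (K.obj y.c)
    let x : HPB F K := ⟨a, y.b, y.c, ha, eqToIso ha ≪≫ y.ψ, y.ψ⟩
    refine ⟨x, ⟨asIso (show (compare F K).obj x ⟶ y from
      ⟨F.preimage (eqToHom ha ≫ y.ψ.hom ≫ y.φ.inv), 𝟙 y.b, 𝟙 y.c, ?_, ?_⟩)⟩⟩ <;>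
      simp [x, _root_.compare]

lemma essSurj_compare_of_full_right (hK : Function.Surjective K.obj) [K.Full] :
    (compare F K).EssSurj where
  mem_essImage y := by
    obtain ⟨c, hc⟩ := hK (F.obj y.a)
    let x : HPB F K := ⟨y.a, y.b, c, hc.symm, y.φ, eqToIso hc ≪≫ y.φ⟩
    refine ⟨x, ⟨asIso (show (compare F K).obj x ⟶ y from
      ⟨𝟙 y.a, 𝟙 y.b, K.preimage (eqToHom hc ≫ y.φ.hom ≫ y.ψ.inv), ?_, ?_⟩)⟩⟩ <;>
      simp [x, _root_.compare]

end Compare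

/-- If one of the legs of the cospan of groupoids is full and surjective on objects,
then every slice of the comparison functor over an object of the 2-fiber product has an
initial object (so, by Quillen's Theorem A, the comparison functor is a homotopy
equivalence on nerves). -/
theorem compare_slices_have_initial (F : C ⥤ D) (K : E ⥤ D)
    (h : (Function.Surjective F.obj ∧ F.Full) ∨ (Function.Surjective K.obj ∧ K.Full)) :
    ∀ y : TwoFiber F K,
      ∃ x : CostructuredArrow (compare F K) y, Nonempty (Limits.IsInitial x) := by
  have : (compare F K).EssSurj := by
    rcases h with ⟨hF, _⟩ | ⟨hK, _⟩
    · exact essSurj_compare_of_full_left F K hF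
    · exact essSurj_compare_of_full_right F K hK
  intro y
  exact ⟨.mk ((compare F K).objObjPreimageIso y).hom,
    ⟨CostructuredArrow.isInitialOfFullyFaithful (fullyFaithfulCompare F K) _⟩⟩
end

section
/- Let C be a category with cofibrations in which: given any cofibration f : A ↣ X with cokernel q : X ↠ Y, a cofibration g : B ↣ Y from a pushout B of (0 ← A ↣ X)-type data, the map A → X factors as cofibrations A ↣ C ↣ X such that the square A → C → B over 0 → B is a pushout and the square C ↣ X, C ↠ B, X ↠ Y, B ↣ Y is both a pushout and a pullback. Then in a category with cofibrations, if A ↣ B ↠ D, (A ↣ B ↣ C) ↠ E, and D ↣ E ↠ F are cofibration sequences, then B ↣ C ↠ F is a cofibration sequence. -/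
/-!
STATEMENT 12: Let `C` be a category with cofibrations satisfying the extension property:
for any cofibration `f : A ↣ X` with cokernel `q : X ↠ Y` and any cofibration
`g : B ↣ Y`, the map `f` factors as cofibrations `A ↣ C' ↣ X` so that `C' ↠ B` is the
cokernel of `A ↣ C'` (left square a pushout) and the square `C' ↣ X`, `C' ↠ B`,
`X ↠ Y`, `B ↣ Y` is both a pushout and a pullback.  Then (in this category with
cofibrations): if `A ↣ B ↠ D`, `(A ↣ B ↣ C) ↠ E`, and `D ↣ E ↠ F` are cofibration
sequences, then `B ↣ C ↠ F` is a cofibration sequence, where `C → F` is the composite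
`C ↠ E ↠ F`.
-/

open CategoryTheory Limits

universe v u

variable {C : Type u} [Category.{v} C]

/-- `q : B ⟶ Q` is the cokernel of `f : A ⟶ B`, i.e. the pushout of `f` along `A → 0`. -/
def CategoryWithCofibrations.IsCokernelOf (W : CategoryWithCofibrations C)
    {A B Q : C} (f : A ⟶ B) (q : B ⟶ Q) : Prop :=
  IsPushout f (W.isZero.from_ A) q (W.isZero.to_ Q)

theorem cofiber_two_out_of_three (W : CategoryWithCofibrations C)
    -- the extension property:
    (Hext : ∀ {A X Y B : C} (f : A ⟶ X) (q : X ⟶ Y) (g : B ⟶ Y),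
      W.cof f → W.IsCokernelOf f q → W.cof g →
        ∃ (C' : C) (c₁ : A ⟶ C') (c₂ : C' ⟶ X) (r : C' ⟶ B),
          W.cof c₁ ∧ W.cof c₂ ∧ c₁ ≫ c₂ = f ∧
            W.IsCokernelOf c₁ r ∧ IsPushout c₂ r q g ∧ IsPullback c₂ r q g)
    -- cofibrations `A ↣ B ↣ C` with the composite also a cofibration:
    {A B C' D E F : C} (f : A ⟶ B) (g : B ⟶ C') (hf : W.cof f) (hg : W.cof g)
    -- `A ↣ B ↠ D` is a cofibration sequence:
    (q₁ : B ⟶ D) (hq₁ : W.IsCokernelOf f q₁)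
    -- `A ↣ B ↣ C ↠ E` is a cofibration sequence:
    (q₂ : C' ⟶ E) (hq₂ : W.IsCokernelOf (f ≫ g) q₂)
    -- `D ↣ E ↠ F` is a cofibration sequence for the induced map `d : D ↣ E`:
    (d : D ⟶ E) (hd : W.cof d) (hcomm : q₁ ≫ d = g ≫ q₂)
    (q₃ : E ⟶ F) (hq₃ : W.IsCokernelOf d q₃) :
    -- then `B ↣ C ↠ F` is a cofibration sequence:
    W.IsCokernelOf g (q₂ ≫ q₃) := by
  have S1 : IsPushout g q₁ q₂ d := by
    rw [← IsPushout.paste_horiz_iff hq₁ hcomm.symm]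
    have : W.isZero.to_ D ≫ d = W.isZero.to_ E := W.isZero.eq_of_src _ _
    rw [this]
    exact hq₂
  have := S1.paste_vert hq₃
  have hz : q₁ ≫ W.isZero.from_ D = W.isZero.from_ B := W.isZero.eq_of_tgt _ _
  rwa [hz] at this
end

section
/- In the category of finite pointed sets with cofibrations the injective pointed maps: given an injective pointed map f : A ↣ X with cokernel (quotient) q : X ↠ X/A, and an injective pointed map g : B ↣ X/A, the set C = q^{-1}(g(B)) contains A, the inclusions A ↣ C ↣ X are injective, the square expressing C/A ≅ B is a pushout, and the square C ↣ X, C ↠ B, B ↣ X/A, X ↠ X/A is both a pushout and a pullback. -/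
/-!
A square of pointed sets is a pullback (pushout) as soon as its underlying square of sets is one,
so everything can be checked in `Type`. There the square formed by a preimage `q⁻¹(B) → B` over an
inclusion `B ⊆ Q` is always a pullback, and a pullback along an injection is a pushout once the
two maps into the corner are jointly surjective and the bottom map is injective off the image of
the left one. The collapse `q : X ↠ X/A` is surjective and injective off `A ⊆ q⁻¹(B)`, and `A` is
exactly the fibre of `C ↠ B` over the basepoint, which gives the square for `C/A ≅ B` in the same
way.
-/

open CategoryTheory

universe u

/-- The relation on `X` whose quotient is `X/A`: identify all the points of `A`. -/
def collapseRel {X : Type u} (A : Set X) (a b : X) : Prop :=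
  a = b ∨ (a ∈ A ∧ b ∈ A)

/-- The quotient `X/A` of a set by a subset. -/
def Collapse {X : Type u} (A : Set X) : Type u :=
  Quot (collapseRel A)

/-- The quotient map `q : X → X/A`. -/
def collapse {X : Type u} (A : Set X) (x : X) : Collapse A :=
  Quot.mk _ x

open Limits

namespace Pointed

theorem Hom.ext_of_ofHom {X Y : Pointed.{u}} {f g : X ⟶ Y} (h : ↾f.toFun = ↾g.toFun) : f = g :=
  Hom.ext (funext fun x => types_congr_hom h x)

variable {W Y Z P : Pointed.{u}} {t : W ⟶ Y} {l : W ⟶ Z} {r : Y ⟶ P} {b : Z ⟶ P}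

theorem isPullback_of_isPullback_ofHom
    (h : IsPullback (↾t.toFun) (↾l.toFun) (↾r.toFun) (↾b.toFun)) : IsPullback t l r b := by
  refine .of_isLimit (PullbackCone.IsLimit.mk (Hom.ext_of_ofHom h.w)
    (fun s => ⟨h.lift (↾s.fst.toFun) (↾s.snd.toFun) (congrArg (fun f => ↾f.toFun) s.condition),
      Types.ext_of_isPullback h ?_ ?_⟩)
    (fun s => Hom.ext_of_ofHom (h.lift_fst _ _ _)) (fun s => Hom.ext_of_ofHom (h.lift_snd _ _ _))
    (fun s m hm₁ hm₂ => Hom.ext_of_ofHom ?_))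
  · exact (types_congr_hom (h.lift_fst _ _ _) s.pt.point).trans
      (s.fst.map_point.trans t.map_point.symm)
  · exact (types_congr_hom (h.lift_snd _ _ _) s.pt.point).trans
      (s.snd.map_point.trans l.map_point.symm)
  · exact h.hom_ext ((congrArg (fun f => ↾f.toFun) hm₁).trans (h.lift_fst _ _ _).symm)
      ((congrArg (fun f => ↾f.toFun) hm₂).trans (h.lift_snd _ _ _).symm)

theorem isPushout_of_isPushout_ofHom
    (h : IsPushout (↾t.toFun) (↾l.toFun) (↾r.toFun) (↾b.toFun)) : IsPushout t l r b := by
  refine .of_isColimit (PushoutCocone.IsColimit.mk (Hom.ext_of_ofHom h.w)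
    (fun s => ⟨h.desc (↾s.inl.toFun) (↾s.inr.toFun) (congrArg (fun f => ↾f.toFun) s.condition),
      ?_⟩)
    (fun s => Hom.ext_of_ofHom (h.inl_desc _ _ _)) (fun s => Hom.ext_of_ofHom (h.inr_desc _ _ _))
    (fun s m hm₁ hm₂ => Hom.ext_of_ofHom ?_))
  · have hdesc := types_congr_hom
      (h.inl_desc (↾s.inl.toFun) (↾s.inr.toFun) (congrArg (fun f => ↾f.toFun) s.condition)) Y.point
    rw [types_comp_apply, TypeCat.ofHom_apply, r.map_point] at hdesc
    exact hdesc.trans s.inl.map_point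
  · exact h.hom_ext ((congrArg (fun f => ↾f.toFun) hm₁).trans (h.inl_desc _ _ _).symm)
      ((congrArg (fun f => ↾f.toFun) hm₂).trans (h.inr_desc _ _ _).symm)

theorem isPushout_of_range_eq_preimage_point (ht : Function.Injective t.toFun)
    (hrange : Set.range t.toFun = r.toFun ⁻¹' {P.point}) (hr : Function.Surjective r.toFun)
    (hinj : Set.InjOn r.toFun (Set.range t.toFun)ᶜ) :
    IsPushout t (⟨fun _ => PUnit.unit, rfl⟩ : W ⟶ of PUnit.unit) r
      (⟨fun _ => P.point, rfl⟩ : of PUnit.unit ⟶ P) := by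
  have : Mono (↾fun _ : PUnit => P.point) :=
    (mono_iff_injective _).2 (Function.injective_of_subsingleton _)
  refine (isPushout_of_isPushout_ofHom (Types.isPushout_of_isPullback_of_mono' ?_
    (Set.eq_univ_of_forall fun p => Or.inr (hr p)) fun y y' hy hy' h => hinj hy hy' h)).flip
  refine (Types.isPullback_iff _ _ _ _).2 ⟨?_, fun w w' hw => ht hw.2, fun _ y hy => ?_⟩
  · ext w
    exact (hrange.subset ⟨w, rfl⟩).symm
  · obtain ⟨w, rfl⟩ := hrange.symm.subset hy.symm
    exact ⟨w, rfl, rfl⟩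

end Pointed

namespace CategoryTheory.Limits.Types

theorem isPullback_preimage {X Q : Type u} (q : X → Q) (B : Set Q) :
    IsPullback (↾(Subtype.val : q ⁻¹' B → X)) (↾B.restrictPreimage q) (↾q)
      (↾(Subtype.val : B → Q)) :=
  (isPullback_iff _ _ _ _).2 ⟨rfl, fun _ _ h => Subtype.ext h.1,
    fun x ⟨y, hy⟩ h => ⟨⟨x, show q x ∈ B from (show q x = y from h) ▸ hy⟩, rfl, Subtype.ext h⟩⟩

theorem isPushout_preimage {X Q : Type u} {q : X → Q} {B : Set Q}
    (hq : Function.Surjective q) (hinj : Set.InjOn q (q ⁻¹' B)ᶜ) :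
    IsPushout (↾(Subtype.val : q ⁻¹' B → X)) (↾B.restrictPreimage q) (↾q)
      (↾(Subtype.val : B → Q)) := by
  have : Mono (↾(Subtype.val : B → Q)) := (mono_iff_injective _).2 Subtype.val_injective
  refine (isPushout_of_isPullback_of_mono' (isPullback_preimage q B).flip
    (Set.eq_univ_of_forall fun y => Or.inr (hq y)) ?_).flip
  intro x y hx hy h
  exact hinj (fun hx' => hx ⟨⟨x, hx'⟩, rfl⟩) (fun hy' => hy ⟨⟨y, hy'⟩, rfl⟩) h

end CategoryTheory.Limits.Types

section Collapse

variable {X : Type u} {A : Set X} {x₀ : X}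

theorem equivalence_collapseRel : Equivalence (collapseRel A) where
  refl _ := .inl rfl
  symm := fun | .inl h => .inl h.symm | .inr ⟨hx, hy⟩ => .inr ⟨hy, hx⟩
  trans := fun
    | .inl rfl, h => h
    | h, .inl rfl => h
    | .inr ⟨hx, _⟩, .inr ⟨_, hz⟩ => .inr ⟨hx, hz⟩

theorem collapse_eq_collapse_iff {x y : X} :
    collapse A x = collapse A y ↔ x = y ∨ x ∈ A ∧ y ∈ A :=
  ⟨fun h => equivalence_collapseRel.eqvGen_iff.1 (Quot.eqvGen_exact h), fun h => Quot.sound h⟩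

theorem collapse_surjective : Function.Surjective (collapse A) :=
  Quot.mk_surjective

theorem injOn_collapse_compl : Set.InjOn (collapse A) Aᶜ :=
  fun _ hx _ _ h => (collapse_eq_collapse_iff.1 h).resolve_right fun h' => hx h'.1

theorem preimage_collapse_singleton (hA : x₀ ∈ A) :
    collapse A ⁻¹' {collapse A x₀} = A := by
  ext x
  simp only [Set.mem_preimage, Set.mem_singleton_iff, collapse_eq_collapse_iff]
  exact ⟨fun | .inl rfl => hA | .inr h => h.1, fun hx => .inr ⟨hx, hA⟩⟩

variable {B : Set (Collapse A)}

theorem range_inclusion_eq_preimage_collapse (hA : x₀ ∈ A) (hB : collapse A x₀ ∈ B)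
    (hAC : A ⊆ collapse A ⁻¹' B) :
    Set.range (Set.inclusion hAC) = B.restrictPreimage (collapse A) ⁻¹' {⟨collapse A x₀, hB⟩} := by
  ext c
  refine ⟨?_, fun hc =>
    ⟨⟨c, (preimage_collapse_singleton hA).subset (congrArg Subtype.val hc)⟩, rfl⟩⟩
  rintro ⟨a, rfl⟩
  exact Subtype.ext (collapse_eq_collapse_iff.2 (.inr ⟨a.2, hA⟩))

theorem injOn_restrictPreimage_collapse (hAC : A ⊆ collapse A ⁻¹' B) :
    Set.InjOn (B.restrictPreimage (collapse A)) (Set.range (Set.inclusion hAC))ᶜ :=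
  fun c hc d hd h => Subtype.ext <| injOn_collapse_compl (fun h' => hc ⟨⟨c, h'⟩, rfl⟩)
    (fun h' => hd ⟨⟨d, h'⟩, rfl⟩) (congrArg Subtype.val h)

end Collapse

theorem pointed_finite_sets_satisfy_condition_general {X : Type u} (x₀ : X)
    (A : Set X) (hA : x₀ ∈ A) (B : Set (Collapse A)) (hB : collapse A x₀ ∈ B) :
    -- `C := q⁻¹(B)` contains `A` …
    ∃ hAC : A ⊆ collapse A ⁻¹' B,
      -- the pointed objects and maps in question:
      let C : Set X := collapse A ⁻¹' B
      let PX : Pointed.{u} := ⟨X, x₀⟩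
      let PA : Pointed.{u} := ⟨A, ⟨x₀, hA⟩⟩
      let PC : Pointed.{u} := ⟨C, ⟨x₀, hAC hA⟩⟩
      let PB : Pointed.{u} := ⟨B, ⟨collapse A x₀, hB⟩⟩
      let PQ : Pointed.{u} := ⟨Collapse A, collapse A x₀⟩
      let PZ : Pointed.{u} := ⟨PUnit, PUnit.unit⟩
      let incAC : PA ⟶ PC := ⟨fun a => ⟨a.1, hAC a.2⟩, rfl⟩
      let incCX : PC ⟶ PX := ⟨Subtype.val, rfl⟩
      let qC : PC ⟶ PB := ⟨fun c => ⟨collapse A c.1, c.2⟩, rfl⟩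
      let qX : PX ⟶ PQ := ⟨collapse A, rfl⟩
      let incB : PB ⟶ PQ := ⟨Subtype.val, rfl⟩
      let toZ : PA ⟶ PZ := ⟨fun _ => PUnit.unit, rfl⟩
      let fromZ : PZ ⟶ PB := ⟨fun _ => PB.point, rfl⟩
      -- …the inclusions `A ↣ C ↣ X` are injective…
      Function.Injective incAC.toFun ∧ Function.Injective incCX.toFun ∧
      -- …the square expressing `C/A ≅ B` is a pushout…
      IsPushout incAC toZ qC fromZ ∧
      -- …and the right-hand square is both a pushout and a pullback.
      IsPushout incCX qC qX incB ∧ IsPullback incCX qC qX incB := by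
  have hAC : A ⊆ collapse A ⁻¹' B := (preimage_collapse_singleton hA).symm.subset.trans
    (Set.preimage_mono (Set.singleton_subset_iff.2 hB))
  refine ⟨hAC, Set.inclusion_injective hAC, Subtype.val_injective, ?_,
    Pointed.isPushout_of_isPushout_ofHom (Types.isPushout_preimage collapse_surjective
      (injOn_collapse_compl.mono (Set.compl_subset_compl.2 hAC))),
    Pointed.isPullback_of_isPullback_ofHom (Types.isPullback_preimage _ _)⟩
  exact Pointed.isPushout_of_range_eq_preimage_point (Set.inclusion_injective hAC)
    (range_inclusion_eq_preimage_collapse hA hB hAC) (collapse_surjective.restrictPreimage B)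
    (injOn_restrictPreimage_collapse hAC)

theorem pointed_finite_sets_satisfy_condition {X : Type u} [Fintype X] (x₀ : X)
    (A : Set X) (hA : x₀ ∈ A) (B : Set (Collapse A)) (hB : collapse A x₀ ∈ B) :
    -- `C := q⁻¹(B)` contains `A` …
    ∃ hAC : A ⊆ collapse A ⁻¹' B,
      -- the pointed objects and maps in question:
      let C : Set X := collapse A ⁻¹' B
      let PX : Pointed.{u} := ⟨X, x₀⟩
      let PA : Pointed.{u} := ⟨A, ⟨x₀, hA⟩⟩
      let PC : Pointed.{u} := ⟨C, ⟨x₀, hAC hA⟩⟩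
      let PB : Pointed.{u} := ⟨B, ⟨collapse A x₀, hB⟩⟩
      let PQ : Pointed.{u} := ⟨Collapse A, collapse A x₀⟩
      let PZ : Pointed.{u} := ⟨PUnit, PUnit.unit⟩
      let incAC : PA ⟶ PC := ⟨fun a => ⟨a.1, hAC a.2⟩, rfl⟩
      let incCX : PC ⟶ PX := ⟨Subtype.val, rfl⟩
      let qC : PC ⟶ PB := ⟨fun c => ⟨collapse A c.1, c.2⟩, rfl⟩
      let qX : PX ⟶ PQ := ⟨collapse A, rfl⟩
      let incB : PB ⟶ PQ := ⟨Subtype.val, rfl⟩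
      let toZ : PA ⟶ PZ := ⟨fun _ => PUnit.unit, rfl⟩
      let fromZ : PZ ⟶ PB := ⟨fun _ => PB.point, rfl⟩
      -- …the inclusions `A ↣ C ↣ X` are injective…
      Function.Injective incAC.toFun ∧ Function.Injective incCX.toFun ∧
      -- …the square expressing `C/A ≅ B` is a pushout…
      IsPushout incAC toZ qC fromZ ∧
      -- …and the right-hand square is both a pushout and a pullback.
      IsPushout incCX qC qX incB ∧ IsPullback incCX qC qX incB :=
  pointed_finite_sets_satisfy_condition_general x₀ A hA B hB
end

section
/- Let C be a category with cofibrations and T a triangulation of the (n+1)-gon containing a triangle with consecutive vertices {j-1, j, j+1}. Then the natural restriction map from lim_T iso(s_• C) (the limit of the sets of isomorphism classes over the triangles and shared diagonals of T) to the limit over T with the triangle {j-1,j,j+1} and the diagonal {j-1,j+1} removed, is surjective. -/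
/-!
STATEMENT 18: Let `C` be a category with cofibrations and `T` a triangulation of the
`(n+1)`-gon containing a triangle with consecutive vertices `{j-1, j, j+1}`.  Then the
natural restriction map from `lim_T iso(s_• C)` — the limit of the sets of isomorphism
classes over the triangles and shared diagonals of `T` — to the limit over `T` with the
triangle `{j-1,j,j+1}` (and its diagonal `{j-1,j+1}`) removed, is surjective.

`iso(s₂C)` is the set of isomorphism classes of cofibration sequences (a cofibration with
a chosen cokernel); for each triangle, its three edges restrict such a class to the
isomorphism class of an object of `C` (`iso(s₁C)`).  The limit over `T` consists of the
families of classes, one for each triangle, agreeing on every shared edge.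
Triangulations of convex polygons are defined recursively: a single triangle is a
triangulation, and two triangulations of sub-polygons lying on the two sides of a common
chord `{a,b}` glue to a triangulation.
-/

open CategoryTheory Limits

universe v u

variable {C : Type u} [Category.{v} C]

/-- An object of `s₂C`: a cofibration together with a chosen cokernel. -/
structure CofSeq (W : CategoryWithCofibrations C) where
  A : C
  B : C
  Q : C
  f : A ⟶ B
  hf : W.cof f
  q : B ⟶ Q
  hq : IsPushout f (W.isZero.from_ A) q (W.isZero.to_ Q)

/-- Isomorphism of cofibration sequences. -/
def CofSeqIso {W : CategoryWithCofibrations C} (x y : CofSeq W) : Prop :=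
  ∃ (a : x.A ≅ y.A) (b : x.B ≅ y.B) (c : x.Q ≅ y.Q),
    x.f ≫ b.hom = a.hom ≫ y.f ∧ x.q ≫ c.hom = b.hom ≫ y.q

/-- `iso(s₂C)`: the set of isomorphism classes of `s₂C`. -/
def IsoS2 (W : CategoryWithCofibrations C) : Type (max u v) :=
  Quot (CofSeqIso (W := W))

/-- `iso(s₁C)`: the set of isomorphism classes of objects of `C`. -/
def IsoS1 (C : Type u) [Category.{v} C] : Type u :=
  Quot (fun X Y : C => Nonempty (X ≅ Y))

/-- Restriction of a class in `iso(s₂C)` along the edge `{0,1}` of the triangle. -/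
def edge01 {W : CategoryWithCofibrations C} : IsoS2 W → IsoS1 C :=
  Quot.map (fun s => s.A) (fun _ _ ⟨a, _, _, _, _⟩ => ⟨a⟩)

/-- Restriction of a class in `iso(s₂C)` along the edge `{0,2}` of the triangle. -/
def edge02 {W : CategoryWithCofibrations C} : IsoS2 W → IsoS1 C :=
  Quot.map (fun s => s.B) (fun _ _ ⟨_, b, _, _, _⟩ => ⟨b⟩)

/-- Restriction of a class in `iso(s₂C)` along the edge `{1,2}` of the triangle. -/
def edge12 {W : CategoryWithCofibrations C} : IsoS2 W → IsoS1 C :=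
  Quot.map (fun s => s.Q) (fun _ _ ⟨_, _, c, _, _⟩ => ⟨c⟩)

/-- A triangle of the `(n+1)`-gon, recorded with increasing vertices. -/
abbrev Triple (n : ℕ) := Fin (n + 1) × Fin (n + 1) × Fin (n + 1)

/-- `v` is a vertex of the triangle `t`. -/
def vmem {n : ℕ} (v : Fin (n + 1)) (t : Triple n) : Prop :=
  v = t.1 ∨ v = t.2.1 ∨ v = t.2.2

/-- Restriction of a class of `s₂C`-diagrams indexed by the triangle `t` along the edge
of `t` with vertices `l < m`. -/
def edgeClass {W : CategoryWithCofibrations C} {n : ℕ} (t : Triple n)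
    (l m : Fin (n + 1)) (x : IsoS2 W) : IsoS1 C :=
  if l = t.1 ∧ m = t.2.1 then edge01 x
  else if l = t.1 ∧ m = t.2.2 then edge02 x
  else edge12 x

/-- Triangulations of (sub)polygons of the `(n+1)`-gon, built recursively: a single
triangle triangulates the polygon with its three vertices; triangulations of the two
polygons on either side of a chord `{a,b}` glue to a triangulation of their union. -/
inductive IsTriangulation (n : ℕ) : Finset (Fin (n + 1)) → Set (Triple n) → Prop
  | tri (a b c : Fin (n + 1)) (h1 : a < b) (h2 : b < c) :
      IsTriangulation n {a, b, c} {(a, b, c)}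
  | glue (S₁ S₂ : Finset (Fin (n + 1))) (T₁ T₂ : Set (Triple n)) (a b : Fin (n + 1))
      (hab : a < b)
      (h₁ : IsTriangulation n S₁ T₁) (h₂ : IsTriangulation n S₂ T₂)
      (hS₁ : S₁ ⊆ Finset.Icc a b) (hS₂ : ∀ x ∈ S₂, x ≤ a ∨ b ≤ x)
      (hint : S₁ ∩ S₂ = {a, b}) :
      IsTriangulation n (S₁ ∪ S₂) (T₁ ∪ T₂)

/-- Compatibility of a family of classes indexed by the triangles of `T`: whenever two
triangles share an edge `{l, m}`, the restrictions of the two classes to that edge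
agree. -/
def Compat {W : CategoryWithCofibrations C} {n : ℕ} (T : Set (Triple n))
    (y : ∀ t ∈ T, IsoS2 W) : Prop :=
  ∀ t (ht : t ∈ T) t' (ht' : t' ∈ T) (l m : Fin (n + 1)), l < m → t ≠ t' →
    vmem l t → vmem m t → vmem l t' → vmem m t' →
      edgeClass t l m (y t ht) = edgeClass t' l m (y t' ht')

/-- `lim_T iso(s_•C)`: compatible families of isomorphism classes over the triangles of
`T`. -/
def Lim (W : CategoryWithCofibrations C) {n : ℕ} (T : Set (Triple n)) :=
  {y : ∀ t ∈ T, IsoS2 W // Compat T y}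

/-- The restriction map between the limits along an inclusion of sets of triangles. -/
def restrictLim (W : CategoryWithCofibrations C) {n : ℕ} {T T' : Set (Triple n)}
    (h : T' ⊆ T) (y : Lim W T) : Lim W T' :=
  ⟨fun t ht => y.1 t (h ht),
   fun t ht t' ht' l m hlm hne a1 a2 a3 a4 =>
     y.2 t (h ht) t' (h ht') l m hlm hne a1 a2 a3 a4⟩

/-!
An ear `{j-1, j, j+1}` meets the rest of the triangulation only along its diagonal
`{j-1, j+1}`: every other triangle avoids the middle vertex `j`, because no chord of the
gluing can separate two triangles through `j` when no other vertex lies strictly between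
`j-1` and `j+1`.  A compatible family on the other triangles therefore fixes only one class
`[V]` on that diagonal, and the trivial extension `0 ↣ V ↠ V` is a class on the ear restricting
to `[V]` on both of its edges not through `j`.
-/

namespace IsTriangulation

variable {n : ℕ} {S : Finset (Fin (n + 1))} {T : Set (Triple n)}

theorem vertices_mem_lt (h : IsTriangulation n S T) :
    ∀ t ∈ T, t.1 ∈ S ∧ t.2.1 ∈ S ∧ t.2.2 ∈ S ∧ t.1 < t.2.1 ∧ t.2.1 < t.2.2 := by
  induction h with
  | tri a b c h1 h2 =>
    rintro t rfl
    simp [h1, h2]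
  | glue _ _ _ _ _ _ _ _ _ _ _ _ ih₁ ih₂ =>
    rintro t (ht | ht)
    · obtain ⟨m1, m2, m3, l1, l2⟩ := ih₁ t ht
      simp [m1, m2, m3, l1, l2]
    · obtain ⟨m1, m2, m3, l1, l2⟩ := ih₂ t ht
      simp [m1, m2, m3, l1, l2]

theorem mem_of_vmem (h : IsTriangulation n S T) {t : Triple n} (ht : t ∈ T)
    {v : Fin (n + 1)} (hv : vmem v t) : v ∈ S := by
  obtain ⟨m1, m2, m3, -, -⟩ := h.vertices_mem_lt t ht
  rcases hv with rfl | rfl | rfl <;> assumption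

theorem eq_of_vmem_of_ear (h : IsTriangulation n S T) {a b c : Fin (n + 1)}
    (habc : (a, b, c) ∈ T) (hS : ∀ s ∈ S, a < s → s < c → s = b) :
    ∀ t ∈ T, vmem b t → t = (a, b, c) := by
  induction h with
  | tri =>
    rintro t rfl -
    exact habc.symm
  | glue S₁ S₂ _ _ p q _ h₁ h₂ hS₁ hS₂ hint ih₁ ih₂ =>
    have hchord : ∀ v ∈ S₁, v ∈ S₂ → v = p ∨ v = q := fun v hv₁ hv₂ => by
      simpa [hint] using Finset.mem_inter.2 ⟨hv₁, hv₂⟩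
    rcases habc with habc | habc
    · obtain ⟨ha, hb, hc, hab, hbc⟩ : a ∈ S₁ ∧ b ∈ S₁ ∧ c ∈ S₁ ∧ a < b ∧ b < c :=
        h₁.vertices_mem_lt _ habc
      rintro t (ht | ht) hbt
      · exact ih₁ habc (fun s hs => hS s (Finset.mem_union_left _ hs)) t ht hbt
      · -- `b` would be an endpoint of the chord, yet lies strictly between `a` and `c`
        have hpa := (Finset.mem_Icc.1 (hS₁ ha)).1
        have hcq := (Finset.mem_Icc.1 (hS₁ hc)).2
        have := hchord b hb (h₂.mem_of_vmem ht hbt)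
        omega
    · obtain ⟨ha, hb, hc, hab, hbc⟩ : a ∈ S₂ ∧ b ∈ S₂ ∧ c ∈ S₂ ∧ a < b ∧ b < c :=
        h₂.vertices_mem_lt _ habc
      rintro t (ht | ht) hbt
      · -- the middle vertex of `t` lies strictly inside the chord, hence strictly between
        -- `a` and `c`, so it is `b`, an endpoint of the chord
        obtain ⟨hx, hy, hz, hxy, hyz⟩ := h₁.vertices_mem_lt t ht
        have hpx := (Finset.mem_Icc.1 (hS₁ hx)).1
        have hzq := (Finset.mem_Icc.1 (hS₁ hz)).2
        have hy' := hS _ (Finset.mem_union_left _ hy)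
        have hb' := hchord b (h₁.mem_of_vmem ht hbt) hb
        have ha' := hS₂ a ha
        have hc' := hS₂ c hc
        omega
      · exact ih₂ habc (fun s hs => hS s (Finset.mem_union_right _ hs)) t ht hbt

end IsTriangulation

noncomputable def CofSeq.trivial (W : CategoryWithCofibrations C) (V : C) : CofSeq W where
  A := W.zero
  B := V
  Q := V
  f := W.isZero.to_ V
  hf := W.cof_from_zero _
  q := 𝟙 V
  hq := by
    rw [W.isZero.eq_of_src (W.isZero.from_ W.zero) (𝟙 _)]
    exact IsPushout.id_vert _

section Extension

variable {W : CategoryWithCofibrations C} {n : ℕ}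

theorem edgeClass_trivial (t : Triple n) {l m : Fin (n + 1)} (hm : m ≠ t.2.1) (V : C) :
    edgeClass t l m (Quot.mk _ (CofSeq.trivial W V)) = Quot.mk _ V := by
  unfold edgeClass
  rw [if_neg fun h => hm h.2]
  split_ifs <;> rfl

theorem Compat.exists_edgeClass_eq {T : Set (Triple n)} {y : ∀ t ∈ T, IsoS2 W}
    (hy : Compat T y) {l m : Fin (n + 1)} (hlm : l < m) :
    ∃ x : IsoS1 C, ∀ t (ht : t ∈ T), vmem l t → vmem m t → edgeClass t l m (y t ht) = x := by
  by_cases hex : ∃ t, ∃ ht : t ∈ T, vmem l t ∧ vmem m t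
  · obtain ⟨t₁, ht₁, hl₁, hm₁⟩ := hex
    refine ⟨edgeClass t₁ l m (y t₁ ht₁), fun t ht hl hm => ?_⟩
    by_cases heq : t = t₁
    · subst heq; rfl
    · exact hy t ht t₁ ht₁ l m hlm heq hl hm hl₁ hm₁
  · push Not at hex
    exact ⟨Quot.mk _ W.zero, fun t ht hl hm => absurd hm (hex t ht hl)⟩

def extendFamily {T : Set (Triple n)} (t₀ : Triple n) (y : ∀ t ∈ T \ {t₀}, IsoS2 W)
    (x : IsoS2 W) : ∀ t ∈ T, IsoS2 W :=
  fun t ht => if h : t = t₀ then x else y t ⟨ht, h⟩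

theorem compat_extendFamily {T : Set (Triple n)} {t₀ : Triple n}
    {y : ∀ t ∈ T \ {t₀}, IsoS2 W} (hy : Compat (T \ {t₀}) y) {x : IsoS2 W}
    (hx : ∀ t (ht : t ∈ T \ {t₀}) (l m : Fin (n + 1)), l < m → vmem l t₀ → vmem m t₀ →
      vmem l t → vmem m t → edgeClass t₀ l m x = edgeClass t l m (y t ht)) :
    Compat T (extendFamily t₀ y x) := by
  intro t ht t' ht' l m hlm hne hl hm hl' hm'
  unfold extendFamily
  by_cases h : t = t₀ <;> by_cases h' : t' = t₀
  · exact absurd (h.trans h'.symm) hne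
  · subst h
    rw [dif_pos rfl, dif_neg h']
    exact hx t' ⟨ht', h'⟩ l m hlm hl hm hl' hm'
  · subst h'
    rw [dif_neg h, dif_pos rfl]
    exact (hx t ⟨ht, h⟩ l m hlm hl' hm' hl hm).symm
  · rw [dif_neg h, dif_neg h']
    exact hy t ⟨ht, h⟩ t' ⟨ht', h'⟩ l m hlm hne hl hm hl' hm'

theorem restrictLim_diff_singleton_surjective {T : Set (Triple n)} {t₀ : Triple n} (hac : t₀.1 < t₀.2.2)
    (hear : ∀ t ∈ T, vmem t₀.2.1 t → t = t₀) :
    Function.Surjective (restrictLim W (Set.sdiff_subset : T \ {t₀} ⊆ T)) := by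
  intro y
  obtain ⟨x, hdiag⟩ := y.2.exists_edgeClass_eq hac
  obtain ⟨V, rfl⟩ := Quot.exists_rep x
  refine ⟨⟨extendFamily t₀ y.1 (Quot.mk _ (CofSeq.trivial W V)),
    compat_extendFamily y.2 fun t ht l m hlm hl₀ hm₀ hl hm => ?_⟩, ?_⟩
  · have hne : ∀ v, vmem v t → v ≠ t₀.2.1 := fun v hv hb =>
      ht.2 (hear t ht.1 (hb ▸ hv))
    obtain ⟨rfl, rfl⟩ : l = t₀.1 ∧ m = t₀.2.2 := by
      have hl' := hne l hl
      have hm' := hne m hm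
      unfold vmem at hl₀ hm₀
      omega
    rw [edgeClass_trivial t₀ (hne _ hm) V, hdiag t ht hl hm]
  · apply Subtype.ext
    funext t ht
    exact dif_neg ht.2

end Extension

/-- If the triangulation `T` of the `(n+1)`-gon contains the triangle with consecutive
vertices `{j-1, j, j+1}`, then the restriction map from `lim_T iso(s_•C)` to the limit
over `T` with this triangle (and its diagonal `{j-1, j+1}`) removed is surjective. -/
theorem restrictLim_surjective (W : CategoryWithCofibrations C) (n : ℕ)
    (T : Set (Triple n)) (hT : IsTriangulation n Finset.univ T)
    (j : ℕ) (hj1 : 1 ≤ j) (hj2 : j + 1 ≤ n)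
    (t₀ : Triple n)
    (ht₀ : t₀ = (⟨j - 1, by omega⟩, ⟨j, by omega⟩, ⟨j + 1, by omega⟩))
    (ht₀T : t₀ ∈ T) :
    Function.Surjective (restrictLim W (Set.diff_subset : T \ {t₀} ⊆ T)) := by
  subst ht₀
  refine restrictLim_diff_singleton_surjective (by simp [Fin.lt_def]) ?_
  refine hT.eq_of_vmem_of_ear ht₀T fun s _ h₁ h₂ => ?_
  simp only [Fin.lt_def, Fin.ext_iff] at h₁ h₂ ⊢
  omega
end
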